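/- Let E be a finite set of edges with positive integer length function l. Then every DP-system on a metric graph assembled from E has finite stabilization time, the set of stabilization times over all DP-systems on metric graphs assembled from E is finite, and consequently there exists a DP-system attaining the maximal (longest) stabilization time, i.e., LSTDP(E) is nonempty. -/

import Mathlib

/-!
Common framework: metric multigraphs assembled from an edge set `E`
(`ends : E → Sym2 V` with distinct endpoints), walks, dynamic-point
systems, stabilization times, and structural graph notions.
-/

/-- Walks in a multigraph on vertices `V` with edge set `E` and endpoint map `ends`:
an alternating sequence of vertices and edges. -/
inductive MGWalk {E V : Type} (ends : E → Sym2 V) : V → V → Type where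
  | nil (a : V) : MGWalk ends a a
  | cons {a b c : V} (e : E) (h : ends e = s(a, b)) (tail : MGWalk ends b c) :
      MGWalk ends a c

namespace MGWalk

variable {E V : Type} {ends : E → Sym2 V}

/-- Length of a walk with respect to an edge-length function. -/
def length (l : E → ℝ) : ∀ {a b : V}, MGWalk ends a b → ℝ
  | _, _, nil _ => 0
  | _, _, cons e _ tail => l e + tail.length l

/-- The list of edge entries of a walk. -/
def edges : ∀ {a b : V}, MGWalk ends a b → List E
  | _, _, nil _ => []
  | _, _, cons e _ tail => e :: tail.edges

end MGWalk

/-- A DP-system on a metric graph assembled from `E`: the vertex set is finite,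
no edge is a loop, the multigraph is connected, and the set of initial vertices
is nonempty. -/
def IsDPSystem {E V : Type} (ends : E → Sym2 V) (S : Set V) : Prop :=
  Finite V ∧ (∀ e, ¬ (ends e).IsDiag) ∧ (∀ a b : V, Nonempty (MGWalk ends a b)) ∧
    S.Nonempty

/-- A dynamic point is present at time `t` at distance `s` from endpoint `x` of
edge `e` (on the arc leaving `x`) iff some walk from an initial vertex to `x`
has length `t - s`. -/
def IsPoint {E V : Type} (ends : E → Sym2 V) (l : E → ℝ) (S : Set V)
    (t : ℝ) (e : E) (x : V) (s : ℝ) : Prop :=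
  x ∈ ends e ∧ 0 ≤ s ∧ s < l e ∧
    ∃ v₀ ∈ S, ∃ w : MGWalk ends v₀ x, w.length l = t - s

/-- Number of dynamic points on edge `e` at time `t`. -/
noncomputable def NptsEdge {E V : Type} (ends : E → Sym2 V) (l : E → ℝ)
    (S : Set V) (e : E) (t : ℝ) : ℕ :=
  Set.ncard {p : V × ℝ | IsPoint ends l S t e p.1 p.2}

/-- Total number of dynamic points at time `t`. -/
noncomputable def Npts {E V : Type} (ends : E → Sym2 V) (l : E → ℝ)
    (S : Set V) (t : ℝ) : ℕ :=
  Set.ncard {p : E × V × ℝ | IsPoint ends l S t p.1 p.2.1 p.2.2}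

/-- `T` is a stabilization bound: `T ≥ 0` and the total number of points is
constant from `T` on. -/
def IsStabBound {E V : Type} (ends : E → Sym2 V) (l : E → ℝ) (S : Set V)
    (T : ℝ) : Prop :=
  0 ≤ T ∧ ∀ t ≥ T, Npts ends l S t = Npts ends l S T

/-- The stabilization time: the least stabilization bound. -/
noncomputable def stabTime {E V : Type} (ends : E → Sym2 V) (l : E → ℝ)
    (S : Set V) : ℝ :=
  sInf {T : ℝ | IsStabBound ends l S T}

/-- `T` is a stabilization bound for edge `e`. -/
def IsEdgeStabBound {E V : Type} (ends : E → Sym2 V) (l : E → ℝ) (S : Set V)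
    (e : E) (T : ℝ) : Prop :=
  0 ≤ T ∧ ∀ t ≥ T, NptsEdge ends l S e t = NptsEdge ends l S e T

/-- The stabilization time of edge `e`. -/
noncomputable def edgeStabTime {E V : Type} (ends : E → Sym2 V) (l : E → ℝ)
    (S : Set V) (e : E) : ℝ :=
  sInf {T : ℝ | IsEdgeStabBound ends l S e T}

/-- Membership in `LSTDP(E)` (given the underlying system is a DP-system):
its stabilization time is maximal among all DP-systems assembled from `E`. -/
def IsMaxStab {E : Type} (l : E → ℝ) {V : Type} (ends : E → Sym2 V)
    (S : Set V) : Prop :=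
  ∀ (V' : Type) (ends' : E → Sym2 V') (S' : Set V'),
    IsDPSystem ends' S' → stabTime ends' l S' ≤ stabTime ends l S

/-- Degree of vertex `x` in the subgraph with edge set `C`. -/
noncomputable def edgeDegree {E V : Type} (ends : E → Sym2 V) (C : Set E)
    (x : V) : ℕ :=
  Set.ncard {e ∈ C | x ∈ ends e}

/-- Degree of vertex `x` in the whole graph. -/
noncomputable def degree {E V : Type} (ends : E → Sym2 V) (x : V) : ℕ :=
  Set.ncard {e : E | x ∈ ends e}

/-- `x` is a vertex of the subgraph with edge set `C`. -/
def OnEdgeSet {E V : Type} (ends : E → Sym2 V) (C : Set E) (x : V) : Prop :=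
  ∃ e ∈ C, x ∈ ends e

/-- The subgraph with edge set `C` is connected. -/
def EdgeSetConn {E V : Type} (ends : E → Sym2 V) (C : Set E) : Prop :=
  ∀ a b : V, OnEdgeSet ends C a → OnEdgeSet ends C b →
    ∃ w : MGWalk ends a b, ∀ e ∈ w.edges, e ∈ C

/-- `C` is the edge set of a cycle: nonempty, connected, and every vertex of its
support has degree exactly two in it. -/
def IsCycleSet {E V : Type} (ends : E → Sym2 V) (C : Set E) : Prop :=
  C.Nonempty ∧ EdgeSetConn ends C ∧
    ∀ x : V, OnEdgeSet ends C x → edgeDegree ends C x = 2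

/-- A bead graph: no vertex lies on two distinct cycles. -/
def IsBead {E V : Type} (ends : E → Sym2 V) : Prop :=
  ∀ C₁ C₂ : Set E, IsCycleSet ends C₁ → IsCycleSet ends C₂ → C₁ ≠ C₂ →
    ∀ x : V, ¬ (OnEdgeSet ends C₁ x ∧ OnEdgeSet ends C₂ x)

/-- The graph has no cycles. -/
def IsAcyclicG {E V : Type} (ends : E → Sym2 V) : Prop :=
  ∀ C : Set E, ¬ IsCycleSet ends C

/-- `H` is the edge set of a path subgraph: nonempty, connected, acyclic, and
all degrees within `H` are at most two. -/
def IsPathSet {E V : Type} (ends : E → Sym2 V) (H : Set E) : Prop :=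
  H.Nonempty ∧ EdgeSetConn ends H ∧ (∀ C ⊆ H, ¬ IsCycleSet ends C) ∧
    ∀ x : V, edgeDegree ends H x ≤ 2

/-- `x` is a terminal vertex of the path subgraph `H`. -/
def IsHandleTerminal {E V : Type} (ends : E → Sym2 V) (H : Set E) (x : V) : Prop :=
  edgeDegree ends H x = 1

/-- The type `W(v, e)` of walks from `v` to an endpoint of edge `e`. -/
def WalkTo {E V : Type} (ends : E → Sym2 V) (v : V) (e : E) : Type :=
  { p : Σ x : V, MGWalk ends v x // p.1 ∈ ends e }

/-- The relation `≈` on `W(v, e)`: walks with the same final endpoint are related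
iff their lengths are congruent modulo `2·l(e)`; walks with different final
endpoints are related iff the difference of their lengths is congruent to
`l(e)` modulo `2·l(e)`. -/
def wapprox {E V : Type} (ends : E → Sym2 V) (l : E → ℝ) (v : V) (e : E)
    (w₁ w₂ : WalkTo ends v e) : Prop :=
  (w₁.1.1 = w₂.1.1 ∧
    ∃ k : ℤ, w₁.1.2.length l - w₂.1.2.length l = k * (2 * l e)) ∨
  (w₁.1.1 ≠ w₂.1.1 ∧
    ∃ k : ℤ, w₁.1.2.length l - w₂.1.2.length l - l e = k * (2 * l e))

/-!
Let `L(x) ⊆ ℕ` be the set of lengths of walks from `S` to `x`, so that a point sits at distance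
`s` from `x` on an arc leaving `x` at time `t` iff `t - s ∈ L(x)`. If `e` joins `x` and `y`, then
`L(x) + 2 l(e) ⊆ L(x)`, so within each residue class mod `2 l(e)` the set `L(x)` is eventually
everything or nothing; hence from some time `T` on every `m ∈ L(y)` is `n + l(e)` with
`n ∈ L(x)`.
Past `T`, moving every point forward by `u ≤ 1`, a point that passes the far end `y` of its arc
continuing on the reverse arc leaving `y`, is a bijection from the points at time `t` onto those at
time `t + u`; so `N` is constant on `[T, ∞)`. As `N` is also constant on each `[n, n + 1)`, the
least stabilization bound exists (and is an integer).

A DP-system is connected, so it has at most `2|E| + 1` vertices and is isomorphic to one on some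
`Fin k` with `k ≤ 2|E| + 1`. Stabilization times are invariant under such relabelling, so only
finitely many occur, and the largest is attained.
-/

namespace MGWalk

variable {E V V' : Type} {ends : E → Sym2 V} {ends' : E → Sym2 V'}

def append : ∀ {a b c : V}, MGWalk ends a b → MGWalk ends b c → MGWalk ends a c
  | _, _, _, nil _, w => w
  | _, _, _, cons e h t, w => cons e h (t.append w)

theorem length_append (l : E → ℝ) :
    ∀ {a b c : V} (w₁ : MGWalk ends a b) (w₂ : MGWalk ends b c),
      (w₁.append w₂).length l = w₁.length l + w₂.length l
  | _, _, _, nil _, _ => (zero_add _).symm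
  | _, _, _, cons e _ t, w₂ => by
    rw [append, length, length, length_append l t w₂, add_assoc]

theorem exists_length_eq_natCast (l : E → ℕ) :
    ∀ {a b : V} (w : MGWalk ends a b), ∃ n : ℕ, w.length (fun e => (l e : ℝ)) = n
  | _, _, nil _ => ⟨0, by simp [length]⟩
  | _, _, cons e _ t => by
    obtain ⟨n, hn⟩ := exists_length_eq_natCast l t
    exact ⟨l e + n, by simp [length, hn]⟩

def map (f : V → V') (hf : ∀ e, (ends e).map f = ends' e) :
    ∀ {a b : V}, MGWalk ends a b → MGWalk ends' (f a) (f b)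
  | _, _, nil a => nil (f a)
  | _, _, cons e h t => cons e (by rw [← hf, h, Sym2.map_mk]) (t.map f hf)

theorem length_map (l : E → ℝ) (f : V → V') (hf : ∀ e, (ends e).map f = ends' e) :
    ∀ {a b : V} (w : MGWalk ends a b), (w.map f hf).length l = w.length l
  | _, _, nil _ => rfl
  | _, _, cons e _ t => by rw [map, length, length, length_map l f hf t]

end MGWalk

open Filter

theorem Nat.eventually_mem_of_add_mem {A : Set ℕ} {c : ℕ} (hA : ∀ a ∈ A, a + c ∈ A) :
    ∀ᶠ n in atTop, n + c ∈ A → n ∈ A := by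
  rcases c.eq_zero_or_pos with rfl | hc
  · exact .of_forall fun n => id
  have hiter : ∀ a ∈ A, ∀ k, a + c * k ∈ A := fun a ha k => by
    induction k with
    | zero => simpa using ha
    | succ k ih => simpa [Nat.mul_succ, ← add_assoc] using hA _ ih
  -- within each residue class mod `c`, `A` is upward closed
  have hres : ∀ r, ∀ᶠ n in atTop, n % c = r → n + c ∈ A → n ∈ A := by
    intro r
    by_cases h : ∃ a ∈ A, a % c = r
    · obtain ⟨a, ha, rfl⟩ := h
      filter_upwards [eventually_ge_atTop a] with n hn hmod _
      obtain ⟨k, hk⟩ := (Nat.modEq_iff_dvd' hn).1 hmod.symm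
      rw [← Nat.add_sub_cancel' hn, hk]
      exact hiter a ha k
    · exact .of_forall fun n hn hnc => (h ⟨n + c, hnc, by simpa using hn⟩).elim
  filter_upwards [(eventually_all_finite (Set.finite_lt_nat c)).2 fun r _ => hres r]
    with n hn using hn (n % c) (Nat.mod_lt n hc) rfl

section Stabilization

variable {E V : Type} {ends : E → Sym2 V} {l : E → ℕ} {S : Set V}

variable (ends l S) in
def walkLengths (x : V) : Set ℕ :=
  {n | ∃ v₀ ∈ S, ∃ w : MGWalk ends v₀ x, w.length (fun e => (l e : ℝ)) = n}

theorem isPoint_iff {t : ℝ} {e : E} {x : V} {s : ℝ} :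
    IsPoint ends (fun e => (l e : ℝ)) S t e x s ↔
      x ∈ ends e ∧ 0 ≤ s ∧ s < l e ∧ ∃ n ∈ walkLengths ends l S x, (n : ℝ) = t - s := by
  simp only [IsPoint, walkLengths]
  constructor
  · rintro ⟨hx, hs₀, hsl, v₀, hv₀, w, hw⟩
    obtain ⟨n, hn⟩ := w.exists_length_eq_natCast l
    exact ⟨hx, hs₀, hsl, n, ⟨v₀, hv₀, w, hn⟩, hn ▸ hw⟩
  · rintro ⟨hx, hs₀, hsl, n, ⟨v₀, hv₀, w, hn⟩, hnt⟩
    exact ⟨hx, hs₀, hsl, v₀, hv₀, w, hn.trans hnt⟩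

theorem add_mem_walkLengths {e : E} {x y : V} (h : ends e = s(x, y)) {n : ℕ}
    (hn : n ∈ walkLengths ends l S x) : n + l e ∈ walkLengths ends l S y := by
  obtain ⟨v₀, hv₀, w, hw⟩ := hn
  refine ⟨v₀, hv₀, w.append (.cons e h (.nil y)), ?_⟩
  simp [MGWalk.length_append, MGWalk.length, hw]

theorem eventually_exists_walkLengths_add_eq [Finite E] [Finite V] :
    ∀ᶠ m in atTop, ∀ e x y, ends e = s(x, y) → m ∈ walkLengths ends l S y →
      ∃ n ∈ walkLengths ends l S x, n + l e = m := by
  simp only [eventually_all]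
  intro e x y h
  have hyx : ends e = s(y, x) := h.trans Sym2.eq_swap
  -- going back and forth along `e` returns to `x` after `2 l e`
  have hback := Nat.eventually_mem_of_add_mem (A := walkLengths ends l S x) (c := 2 * l e)
    fun n hn => by simpa [two_mul, add_assoc] using
      add_mem_walkLengths hyx (add_mem_walkLengths h hn)
  filter_upwards [(tendsto_sub_atTop_nat (l e)).eventually hback, eventually_ge_atTop (l e)]
    with m hm hle hy
  refine ⟨m - l e, hm ?_, by omega⟩
  convert add_mem_walkLengths hyx hy using 1
  omega

variable (l) in
noncomputable def slide (u : ℝ) {e : E} {x : V} (hx : x ∈ ends e) (s : ℝ) : E × V × ℝ :=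
  if s + u < l e then (e, x, s + u) else (e, Sym2.Mem.other hx, s + u - l e)

theorem isPoint_slide (hl : ∀ e, 0 < l e) {t u s : ℝ} (hu₀ : 0 ≤ u) (hu₁ : u ≤ 1) {e : E}
    {x : V} (hp : IsPoint ends (fun e => (l e : ℝ)) S t e x s) :
    let q := slide l u (isPoint_iff.1 hp).1 s
    IsPoint ends (fun e => (l e : ℝ)) S (t + u) q.1 q.2.1 q.2.2 := by
  obtain ⟨hx, hs₀, hsl, n, hn, hnt⟩ := isPoint_iff.1 hp
  simp only [slide]
  split_ifs with hlt
  · exact isPoint_iff.2 ⟨hx, by linarith, hlt, n, hn, by linarith⟩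
  · have : (1 : ℝ) ≤ l e := by exact_mod_cast hl e
    exact isPoint_iff.2 ⟨Sym2.other_mem hx, by linarith, by linarith, n + l e,
      add_mem_walkLengths (Sym2.other_spec hx).symm hn, by push_cast; linarith⟩

theorem eq_of_slide_eq {u s₁ s₂ : ℝ} {e₁ e₂ : E} {x₁ x₂ : V} (hx₁ : x₁ ∈ ends e₁)
    (hx₂ : x₂ ∈ ends e₂) (hs₁ : 0 ≤ s₁) (hs₂ : 0 ≤ s₂) (hsl₁ : s₁ < l e₁) (hsl₂ : s₂ < l e₂)
    (h : slide l u hx₁ s₁ = slide l u hx₂ s₂) : (e₁, x₁, s₁) = (e₂, x₂, s₂) := by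
  simp only [slide] at h
  split_ifs at h <;> simp only [Prod.mk.injEq] at h <;> obtain ⟨rfl, hx, hs⟩ := h
  · simp [hx, show s₁ = s₂ by linarith]
  · linarith
  · linarith
  · have : s(x₁, Sym2.Mem.other hx₁) = s(x₂, Sym2.Mem.other hx₁) := by
      rw [Sym2.other_spec, hx, Sym2.other_spec]
    simp [Sym2.congr_left.1 this, show s₁ = s₂ by linarith]

theorem Npts_add_eq (hl : ∀ e, 0 < l e) {t u : ℝ} (hu₀ : 0 ≤ u) (hu₁ : u ≤ 1)
    (hback : ∀ e x y, ends e = s(x, y) → ∀ m ∈ walkLengths ends l S y, t < m → m ≤ t + u →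
      ∃ n ∈ walkLengths ends l S x, n + l e = m) :
    Npts ends (fun e => (l e : ℝ)) S (t + u) = Npts ends (fun e => (l e : ℝ)) S t := by
  symm
  refine Set.ncard_congr (fun p hp => slide l u (isPoint_iff.1 hp).1 p.2.2)
    (fun _ hp => isPoint_slide hl hu₀ hu₁ hp) (fun _ _ hp₁ hp₂ h => ?_) ?_
  · obtain ⟨hx₁, hs₁, hsl₁, -⟩ := isPoint_iff.1 hp₁
    obtain ⟨hx₂, hs₂, hsl₂, -⟩ := isPoint_iff.1 hp₂
    exact eq_of_slide_eq hx₁ hx₂ hs₁ hs₂ hsl₁ hsl₂ h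
  rintro ⟨e, y, s⟩ hq
  obtain ⟨hy, hs₀, hsl, m, hm, hmt⟩ := isPoint_iff.1 hq
  rcases le_or_gt u s with hsu | hsu
  · refine ⟨(e, y, s - u), isPoint_iff.2 ⟨hy, by linarith, by linarith, m, hm, by linarith⟩, ?_⟩
    simp [slide, hsl]
  · have : (1 : ℝ) ≤ l e := by exact_mod_cast hl e
    obtain ⟨n, hn, rfl⟩ := hback e _ y ((Sym2.other_spec hy).symm.trans Sym2.eq_swap) m hm
      (by linarith) (by linarith)
    refine ⟨(e, Sym2.Mem.other hy, s + l e - u), isPoint_iff.2 ⟨Sym2.other_mem hy,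
      by linarith, by linarith, n, hn, by push_cast at hmt; linarith⟩, ?_⟩
    simp only [slide, Sym2.other_invol]
    rw [if_neg (by linarith)]
    simp

theorem Npts_natCast_add (hl : ∀ e, 0 < l e) (n : ℕ) {u : ℝ} (hu₀ : 0 ≤ u) (hu₁ : u < 1) :
    Npts ends (fun e => (l e : ℝ)) S (n + u) = Npts ends (fun e => (l e : ℝ)) S n :=
  Npts_add_eq hl hu₀ hu₁.le fun _ _ _ _ m _ hnm hmn => by
    have : n < m := by exact_mod_cast hnm
    have : m < n + 1 := by exact_mod_cast (show (m : ℝ) < n + 1 by linarith)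
    omega

theorem Npts_eq_Npts_natFloor (hl : ∀ e, 0 < l e) {t : ℝ} (ht : 0 ≤ t) :
    Npts ends (fun e => (l e : ℝ)) S t = Npts ends (fun e => (l e : ℝ)) S ⌊t⌋₊ := by
  simpa using Npts_natCast_add (S := S) hl ⌊t⌋₊ (sub_nonneg.2 (Nat.floor_le ht))
    (by linarith [Nat.lt_floor_add_one t])

theorem exists_Npts_add_eq [Finite E] [Finite V] (hl : ∀ e, 0 < l e) :
    ∃ T : ℕ, ∀ t : ℝ, T ≤ t → ∀ u : ℝ, 0 ≤ u → u ≤ 1 →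
      Npts ends (fun e => (l e : ℝ)) S (t + u) = Npts ends (fun e => (l e : ℝ)) S t := by
  obtain ⟨T, hT⟩ := eventually_atTop.1
    (eventually_exists_walkLengths_add_eq (ends := ends) (l := l) (S := S))
  refine ⟨T, fun t ht u hu₀ hu₁ => Npts_add_eq hl hu₀ hu₁ fun e x y hxy m hm htm _ =>
    hT m ?_ e x y hxy hm⟩
  exact_mod_cast ht.trans htm.le

theorem exists_isStabBound_natCast [Finite E] [Finite V] (hl : ∀ e, 0 < l e) :
    ∃ T : ℕ, IsStabBound ends (fun e => (l e : ℝ)) S T := by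
  obtain ⟨T, hT⟩ := exists_Npts_add_eq (ends := ends) (S := S) hl
  have hnat : ∀ k : ℕ,
      Npts ends (fun e => (l e : ℝ)) S (T + k) = Npts ends (fun e => (l e : ℝ)) S T := by
    intro k
    induction k with
    | zero => simp
    | succ k ih => rw [Nat.cast_succ, ← add_assoc, hT _ (by simp) 1 zero_le_one le_rfl, ih]
  refine ⟨T, T.cast_nonneg, fun t ht => ?_⟩
  have hk := hT (T + ⌊t - T⌋₊) (by simp) (t - T - ⌊t - T⌋₊)
    (sub_nonneg.2 (Nat.floor_le (sub_nonneg.2 ht))) (by linarith [Nat.lt_floor_add_one (t - T)])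
  rwa [show (T : ℝ) + ⌊t - T⌋₊ + (t - T - ⌊t - T⌋₊) = t by ring, hnat] at hk

theorem IsStabBound.natFloor (hl : ∀ e, 0 < l e) {T : ℝ}
    (hT : IsStabBound ends (fun e => (l e : ℝ)) S T) :
    IsStabBound ends (fun e => (l e : ℝ)) S ⌊T⌋₊ := by
  obtain ⟨hT₀, hT⟩ := hT
  refine ⟨Nat.cast_nonneg _, fun t ht => ?_⟩
  rcases le_or_gt T t with hTt | htT
  · rw [hT t hTt, Npts_eq_Npts_natFloor hl hT₀]
  · have : ⌊t⌋₊ = ⌊T⌋₊ := le_antisymm (Nat.floor_le_floor htT.le) (Nat.le_floor ht)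
    rw [Npts_eq_Npts_natFloor hl ((Nat.cast_nonneg _).trans ht), this]

theorem exists_isLeast_isStabBound [Finite E] [Finite V] (hl : ∀ e, 0 < l e) :
    ∃ T, IsLeast {T | IsStabBound ends (fun e => (l e : ℝ)) S T} T := by
  classical
  have hex := exists_isStabBound_natCast (ends := ends) (S := S) hl
  refine ⟨Nat.find hex, Nat.find_spec hex, fun T hT => ?_⟩
  calc (Nat.find hex : ℝ) ≤ ⌊T⌋₊ := by exact_mod_cast Nat.find_min' hex (hT.natFloor hl)
    _ ≤ T := Nat.floor_le hT.1

end Stabilization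

section Relabel

variable {E V V' : Type} {ends : E → Sym2 V} {ends' : E → Sym2 V'} {l : E → ℝ} {S : Set V}

theorem IsPoint.map (f : V → V') (hf : ∀ e, (ends e).map f = ends' e) {t s : ℝ} {e : E}
    {x : V} (h : IsPoint ends l S t e x s) : IsPoint ends' l (f '' S) t e (f x) s := by
  obtain ⟨hx, hs₀, hsl, v₀, hv₀, w, hw⟩ := h
  exact ⟨hf e ▸ Sym2.mem_map.2 ⟨x, hx, rfl⟩, hs₀, hsl, f v₀, Set.mem_image_of_mem f hv₀,
    w.map f hf, (w.length_map l f hf).trans hw⟩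

theorem isPoint_map_equiv_iff (φ : V ≃ V') {t s : ℝ} {e : E} {x : V} :
    IsPoint (fun e => (ends e).map φ) l (φ '' S) t e (φ x) s ↔ IsPoint ends l S t e x s := by
  refine ⟨fun h => ?_, fun h => h.map φ fun _ => rfl⟩
  simpa using h.map φ.symm (ends' := ends) fun e => by simp [Sym2.map_map]

theorem Npts_map_equiv (φ : V ≃ V') (t : ℝ) :
    Npts (fun e => (ends e).map φ) l (φ '' S) t = Npts ends l S t := by
  symm
  refine Set.ncard_congr (fun p _ => (p.1, φ p.2.1, p.2.2))
    (fun _ hp => (isPoint_map_equiv_iff φ).2 hp) ?_ ?_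
  · rintro ⟨e, x, s⟩ ⟨e', x', s'⟩ _ _ h
    simpa using h
  · rintro ⟨e, x', s⟩ hp
    exact ⟨(e, φ.symm x', s), (isPoint_map_equiv_iff φ).1 (by simpa using hp), by simp⟩

theorem stabTime_map_equiv (φ : V ≃ V') :
    stabTime (fun e => (ends e).map φ) l (φ '' S) = stabTime ends l S := by
  simp only [stabTime, IsStabBound, Npts_map_equiv]

theorem natCard_le_of_connected [Finite E] (hconn : ∀ a b : V, Nonempty (MGWalk ends a b)) :
    Nat.card V ≤ 2 * Nat.card E + 1 := by
  rcases isEmpty_or_nonempty V with _ | ⟨⟨v₀⟩⟩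
  · simp
  let f : Option (E × Bool) → V
    | none => v₀
    | some (e, b) => if b then (ends e).out.1 else (ends e).out.2
  have hf : f.Surjective := by
    intro v
    obtain ⟨w⟩ := hconn v v₀
    cases w with
    | nil => exact ⟨none, rfl⟩
    | cons e h _ =>
      have hv : v ∈ ends e := h ▸ Sym2.mem_mk_left _ _
      rw [← Quot.out_eq (ends e)] at hv
      rcases Sym2.mem_iff.1 hv with hv | hv
      exacts [⟨some (e, true), hv.symm⟩, ⟨some (e, false), hv.symm⟩]
  simpa [Nat.card_prod, two_mul, mul_comm] using Nat.card_le_card_of_surjective f hf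

end Relabel

section Maximum

variable {E : Type} [Finite E]

theorem finite_stabTimes (l : E → ℝ) :
    {x : ℝ | ∃ (V : Type) (ends : E → Sym2 V) (S : Set V),
      IsDPSystem ends S ∧ stabTime ends l S = x}.Finite := by
  refine ((Set.finite_le_nat (2 * Nat.card E + 1)).biUnion fun k _ =>
    Set.finite_range fun q : (E → Sym2 (Fin k)) × Set (Fin k) => stabTime q.1 l q.2).subset ?_
  rintro _ ⟨V, ends, S, ⟨hV, -, hconn, -⟩, rfl⟩
  exact Set.mem_biUnion (natCard_le_of_connected hconn)
    ⟨(_, Finite.equivFin V '' S), stabTime_map_equiv _⟩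

theorem exists_isDPSystem :
    ∃ (V : Type) (ends : E → Sym2 V) (S : Set V), IsDPSystem ends S := by
  let ends : E → Sym2 (Option E) := fun e => s(none, some e)
  have toHub : ∀ a, MGWalk ends a none
    | none => .nil none
    | some e => .cons e Sym2.eq_swap (.nil none)
  have fromHub : ∀ b, MGWalk ends none b
    | none => .nil none
    | some e => .cons e rfl (.nil (some e))
  exact ⟨Option E, ends, {none}, inferInstance, fun e => by simp [ends],
    fun a b => ⟨(toHub a).append (fromHub b)⟩, Set.singleton_nonempty none⟩

theorem exists_isMaxStab (l : E → ℝ) :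
    ∃ (V : Type) (ends : E → Sym2 V) (S : Set V), IsDPSystem ends S ∧ IsMaxStab l ends S := by
  obtain ⟨V₀, ends₀, S₀, hDP₀⟩ := exists_isDPSystem (E := E)
  obtain ⟨_, ⟨V, ends, S, hDP, rfl⟩, hmax⟩ :=
    Set.exists_max_image _ id (finite_stabTimes l) ⟨_, V₀, ends₀, S₀, hDP₀, rfl⟩
  exact ⟨V, ends, S, hDP, fun V' ends' S' hDP' => hmax _ ⟨V', ends', S', hDP', rfl⟩⟩

end Maximum

/-- with positive integer edge lengths, every DP-system assembled
from `E` has a (finite, attained) least stabilization bound, the set of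
stabilization times of all DP-systems assembled from `E` is finite, and there is
a DP-system attaining the maximal stabilization time, i.e. `LSTDP(E)` is
nonempty. -/
theorem stmt12 {E : Type} [Fintype E] (l : E → ℕ) (hl : ∀ e, 0 < l e) :
    (∀ (V : Type) (ends : E → Sym2 V) (S : Set V), IsDPSystem ends S →
      ∃ T : ℝ, IsLeast {T' : ℝ | IsStabBound ends (fun e => (l e : ℝ)) S T'} T) ∧
    (Set.Finite {x : ℝ | ∃ (V : Type) (ends : E → Sym2 V) (S : Set V),
      IsDPSystem ends S ∧ stabTime ends (fun e => (l e : ℝ)) S = x}) ∧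
    (∃ (V : Type) (ends : E → Sym2 V) (S : Set V),
      IsDPSystem ends S ∧ IsMaxStab (fun e => (l e : ℝ)) ends S) :=
  ⟨fun _ _ _ hDP => have := hDP.1; exists_isLeast_isStabBound hl,
    finite_stabTimes _, exists_isMaxStab _⟩
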